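/- arXiv:1604.04845 — 2 statements merged into one kernel-verified Lean document; each statement's English description precedes it below -/
import Mathlib

section
/- Let α ∈ [0, 1), θ > 0, δ̂ > 0 with δ̂ > (α²(1+α) + αθ)/(1 − α²). Let α_k ∈ [0, α], ρ_k ∈ (0, (δ̂ − α[α(1+α) + αδ̂ + θ])/(δ̂[1 + α(1+α) + αδ̂ + θ])), set λ_k = 1/(α_k + δ̂ρ_k), and let γ_{k+1} be a real number with 0 < γ_{k+1} ≤ α(1+α) + αδ̂. Then (1 − ρ_k)(α_k λ_k − 1)/ρ_k + γ_{k+1} ≤ −θ; equivalently, (α_k + δ̂ρ_k)(γ_{k+1} + θ) + δ̂ρ_k ≤ δ̂. -/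
open Filter Topology Set
open scoped InnerProductSpace RealInnerProductSpace Pointwise

noncomputable section

/-- The inertial parameter condition on the extrapolation parameters `αs` and the
relaxation parameters `ρs`. -/
def InertialCond (αs ρs : ℕ → ℝ) : Prop :=
  ∃ α ρ θ δ : ℝ,
    Monotone αs ∧ αs 1 = 0 ∧ (∀ k, 1 ≤ k → 0 ≤ αs k ∧ αs k ≤ α) ∧ 0 ≤ α ∧ α < 1 ∧
    0 < ρ ∧ 0 < θ ∧ 0 < δ ∧
    (α ^ 2 * (1 + α) + α * θ) / (1 - α ^ 2) < δ ∧
    (∀ k, 1 ≤ k → ρ ≤ ρs k ∧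
      ρs k < (δ - α * (α * (1 + α) + α * δ + θ)) / (δ * (1 + α * (1 + α) + α * δ + θ)))

variable {H : Type*} [NormedAddCommGroup H] [InnerProductSpace ℝ H]

/-- `g` is a proper, lower semicontinuous, convex function with values in `(-∞, +∞]`. -/
def Gamma0 (g : H → EReal) : Prop :=
  (∃ x, g x ≠ ⊤) ∧ (∀ x, g x ≠ ⊥) ∧ LowerSemicontinuous g ∧
  ∀ x y : H, ∀ a b : ℝ, 0 ≤ a → 0 ≤ b → a + b = 1 →
    g (a • x + b • y) ≤ (a : EReal) * g x + (b : EReal) * g y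

/-- The Legendre–Fenchel conjugate of `h`. -/
def fenchel (h : H → EReal) (y : H) : EReal :=
  ⨆ x : H, ((⟪y, x⟫_ℝ : ℝ) : EReal) - h x

/-- `p = prox_{τ g}(u)`, i.e. `p` minimizes `w ↦ g w + ‖u - w‖² / (2τ)`. -/
def IsProx (g : H → EReal) (τ : ℝ) (u p : H) : Prop :=
  ∀ w, g p + ((1 / (2 * τ) * ‖u - p‖ ^ 2 : ℝ) : EReal) ≤
    g w + ((1 / (2 * τ) * ‖u - w‖ ^ 2 : ℝ) : EReal)

/-- `p = prox_{S g}(u)` for a positive definite map `S` with inverse `Sinv`, i.e. `p`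
minimizes `w ↦ g w + (1/2) ⟪S⁻¹ (u - w), u - w⟫`. -/
def IsProxOp (g : H → EReal) (Sinv : H →L[ℝ] H) (u p : H) : Prop :=
  ∀ w, g p + ((1 / 2 * ⟪Sinv (u - p), u - p⟫_ℝ : ℝ) : EReal) ≤
    g w + ((1 / 2 * ⟪Sinv (u - w), u - w⟫_ℝ : ℝ) : EReal)

/-- `B` is cocoercive with respect to `Linv = L⁻¹`. -/
def CocoerciveWrt (B : H → H) (Linv : H →L[ℝ] H) : Prop :=
  ∀ x y : H, ⟪Linv (B x - B y), B x - B y⟫_ℝ ≤ ⟪B x - B y, x - y⟫_ℝ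

/-- `L` is a selfadjoint positive definite (bounded linear) map. -/
def PosDefSA (L : H →L[ℝ] H) : Prop :=
  (∀ x y : H, ⟪L x, y⟫_ℝ = ⟪x, L y⟫_ℝ) ∧ ∀ x : H, x ≠ 0 → 0 < ⟪L x, x⟫_ℝ

/-- `Linv` is a two-sided inverse of `L`. -/
def InvPair (L Linv : H →L[ℝ] H) : Prop :=
  (∀ x, L (Linv x) = x) ∧ (∀ x, Linv (L x) = x)

/-- The subdifferential of an extended-real-valued convex function. -/
def subdiff (g : H → EReal) (x : H) : Set H :=
  {u | ∀ z, g x + ((⟪u, z - x⟫_ℝ : ℝ) : EReal) ≤ g z}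

/-- The diagonal operator on `EuclideanSpace ℝ (Fin q)` with diagonal entries `t`. -/
def diagOp {q : ℕ} (t : Fin q → ℝ) :
    EuclideanSpace ℝ (Fin q) →L[ℝ] EuclideanSpace ℝ (Fin q) :=
  LinearMap.toContinuousLinearMap
  { toFun := fun x => (WithLp.toLp 2 (fun i => t i * x i) : EuclideanSpace ℝ (Fin q))
    map_add' := by intro x y; ext i; simp [mul_add]
    map_smul' := by intro c x; ext i; simp [smul_eq_mul]; try ring }

end

/-!
With `c = α(1+α) + αδ + θ`, the bounds `αk ≤ α` and `γ + θ ≤ c` give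
`(αk + δρ)(γ + θ) + δρ ≤ αc + δρ(1 + c)`, which is `< δ` exactly by the upper bound on `ρ`.
The first inequality is the second one divided by `ρ (αk + δρ) > 0`, since
`αk λ - 1 = -δρ λ` for `λ = 1 / (αk + δρ)`.
-/

section InertialParameters

variable {a α δ ρ g c γ θ : ℝ}

theorem add_mul_mul_add_le_of_lt_div (ha : 0 ≤ a) (haα : a ≤ α) (hδ : 0 < δ) (hρ : 0 ≤ ρ)
    (hg : 0 ≤ g) (hgc : g ≤ c) (hρc : ρ < (δ - α * c) / (δ * (1 + c))) :
    (a + δ * ρ) * g + δ * ρ ≤ δ := by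
  have hρc' : ρ * (δ * (1 + c)) < δ - α * c :=
    (lt_div_iff₀ (mul_pos hδ (by linarith))).1 hρc
  calc (a + δ * ρ) * g + δ * ρ ≤ (α + δ * ρ) * c + δ * ρ := by
        gcongr
        exact add_nonneg (ha.trans haα) (mul_nonneg hδ.le hρ)
    _ ≤ δ := by linear_combination hρc'

theorem relaxation_term_eq (hρ : ρ ≠ 0) (hs : a + δ * ρ ≠ 0) :
    (1 - ρ) * (a * (1 / (a + δ * ρ)) - 1) / ρ = -((1 - ρ) * δ / (a + δ * ρ)) := by
  rw [mul_one_div, div_sub_one hs]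
  field_simp
  ring

theorem relaxation_term_add_le_neg (hρ : 0 < ρ) (hs : 0 < a + δ * ρ)
    (h : (a + δ * ρ) * (γ + θ) + δ * ρ ≤ δ) :
    (1 - ρ) * (a * (1 / (a + δ * ρ)) - 1) / ρ + γ ≤ -θ := by
  rw [relaxation_term_eq hρ.ne' hs.ne']
  have : γ + θ ≤ (1 - ρ) * δ / (a + δ * ρ) := (le_div_iff₀ hs).2 (by linarith)
  linarith

end InertialParameters

theorem inertial_parameter_key_estimate_general
    (α θ δ αk ρk γk1 : ℝ)
    (hθ : 0 < θ) (hδ0 : 0 < δ)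
    (hαk : 0 ≤ αk ∧ αk ≤ α)
    (hρk : 0 < ρk ∧
      ρk < (δ - α * (α * (1 + α) + α * δ + θ)) / (δ * (1 + α * (1 + α) + α * δ + θ)))
    (hγ : 0 < γk1 ∧ γk1 ≤ α * (1 + α) + α * δ) :
    (1 - ρk) * (αk * (1 / (αk + δ * ρk)) - 1) / ρk + γk1 ≤ -θ ∧
    (αk + δ * ρk) * (γk1 + θ) + δ * ρk ≤ δ := by
  obtain ⟨hαk0, hαkα⟩ := hαk
  obtain ⟨hρk0, hρkc⟩ := hρk
  have key : (αk + δ * ρk) * (γk1 + θ) + δ * ρk ≤ δ :=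
    add_mul_mul_add_le_of_lt_div (c := α * (1 + α) + α * δ + θ) hαk0 hαkα hδ0 hρk0.le
      (by linarith [hγ.1]) (by linarith [hγ.2]) (by convert hρkc using 3; ring)
  exact ⟨relaxation_term_add_le_neg hρk0 (by positivity) key, key⟩

theorem inertial_parameter_key_estimate
    (α θ δ αk ρk γk1 : ℝ)
    (hα : 0 ≤ α ∧ α < 1) (hθ : 0 < θ) (hδ0 : 0 < δ)
    (hδ : (α ^ 2 * (1 + α) + α * θ) / (1 - α ^ 2) < δ)
    (hαk : 0 ≤ αk ∧ αk ≤ α)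
    (hρk : 0 < ρk ∧
      ρk < (δ - α * (α * (1 + α) + α * δ + θ)) / (δ * (1 + α * (1 + α) + α * δ + θ)))
    (hγ : 0 < γk1 ∧ γk1 ≤ α * (1 + α) + α * δ) :
    (1 - ρk) * (αk * (1 / (αk + δ * ρk)) - 1) / ρk + γk1 ≤ -θ ∧
    (αk + δ * ρk) * (γk1 + θ) + δ * ρk ≤ δ :=
  inertial_parameter_key_estimate_general α θ δ αk ρk γk1 hθ hδ0 hαk hρk hγ
end

section
/- Let (φ^k)_{k∈ℕ}, (δ_k)_{k∈ℕ}, and (α_k)_{k∈ℕ} be sequences in [0, +∞) such that φ^{k+1} ≤ φ^k + α_k(φ^k − φ^{k−1}) + δ_k for all k ≥ 1, Σ_{k∈ℕ} δ_k < +∞, and there exists α with 0 ≤ α_k ≤ α < 1 for all k ∈ ℕ. Then (i) Σ_{k≥1} [φ^k − φ^{k−1}]₊ < +∞, where [t]₊ = max{t, 0}, and (ii) there exists φ* ∈ [0, +∞) such that lim_{k→+∞} φ^k = φ*. -/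
open Filter Topology Set
open scoped InnerProductSpace RealInnerProductSpace Pointwise

/-!
Writing `θ k = [φ (k+1) - φ k]₊`, the recursion gives `θ (k+1) ≤ α θ k + δ (k+1)`, so the
partial sums `S n` of `θ` satisfy `(1 - α) S (n+1) ≤ θ 0 + ∑ δ` and `θ` is summable. Then
`φ n - S n` is antitone and bounded below by `-∑ θ`, hence convergent, and so is `φ n`.
-/

lemma max_zero_le_mul_max_zero_add {x y a α d : ℝ} (hy : y ≤ a * x + d)
    (ha0 : 0 ≤ a) (ha : a ≤ α) (hd : 0 ≤ d) :
    max y 0 ≤ α * max x 0 + d := by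
  have hx : a * x ≤ α * max x 0 :=
    (mul_le_mul_of_nonneg_left (le_max_left x 0) ha0).trans
      (mul_le_mul_of_nonneg_right ha (le_max_right x 0))
  have hα : 0 ≤ α * max x 0 := mul_nonneg (ha0.trans ha) (le_max_right x 0)
  exact max_le (by linarith) (by linarith)

theorem summable_of_succ_le_mul_add {θ ε : ℕ → ℝ} {α : ℝ} (hθ : ∀ k, 0 ≤ θ k)
    (hε : ∀ k, 0 ≤ ε k) (hεsum : Summable ε) (hα0 : 0 ≤ α) (hα1 : α < 1)
    (hstep : ∀ k, θ (k + 1) ≤ α * θ k + ε k) : Summable θ := by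
  set S : ℕ → ℝ := fun n => ∑ i ∈ Finset.range n, θ i
  have hS_mono : Monotone S := fun m n hmn =>
    Finset.sum_le_sum_of_subset_of_nonneg (Finset.range_mono hmn) fun i _ _ => hθ i
  have hS_succ (n : ℕ) : S (n + 1) ≤ θ 0 + α * S (n + 1) + ∑' i, ε i :=
    calc S (n + 1) = θ 0 + ∑ i ∈ Finset.range n, θ (i + 1) := by
          simp only [S, Finset.sum_range_succ', add_comm]
      _ ≤ θ 0 + (α * S n + ∑ i ∈ Finset.range n, ε i) := by
          rw [Finset.mul_sum, ← Finset.sum_add_distrib]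
          gcongr with i
          exact hstep i
      _ ≤ θ 0 + α * S (n + 1) + ∑' i, ε i := by
          have := mul_le_mul_of_nonneg_left (hS_mono n.le_succ) hα0
          have := hεsum.sum_le_tsum (Finset.range n) fun i _ => hε i
          linarith
  refine summable_of_sum_range_le hθ (c := (θ 0 + ∑' i, ε i) / (1 - α)) fun n => ?_
  rw [le_div_iff₀ (sub_pos.mpr hα1)]
  nlinarith [hS_succ n, hS_mono n.le_succ]

theorem exists_tendsto_of_summable_max_sub_zero {φ : ℕ → ℝ} (hφ : BddBelow (range φ))
    (hsum : Summable fun k => max (φ (k + 1) - φ k) 0) : ∃ l, Tendsto φ atTop (𝓝 l) := by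
  set θ : ℕ → ℝ := fun k => max (φ (k + 1) - φ k) 0
  set t : ℕ → ℝ := fun n => φ n - ∑ i ∈ Finset.range n, θ i
  have ht_anti : Antitone t := antitone_nat_of_succ_le fun n => by
    simp only [t, Finset.sum_range_succ]
    linarith [le_max_left (φ (n + 1) - φ n) 0]
  have ht_bdd : BddBelow (range t) := by
    obtain ⟨c, hc⟩ := hφ
    refine ⟨c - ∑' i, θ i, ?_⟩
    rintro _ ⟨n, rfl⟩
    have := hsum.sum_le_tsum (Finset.range n) fun i _ => le_max_right _ _
    linarith [hc (mem_range_self n)]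
  have hφ_eq : φ = fun n => t n + ∑ i ∈ Finset.range n, θ i := by
    funext n; simp [t]
  exact ⟨_, hφ_eq ▸ (tendsto_atTop_ciInf ht_anti ht_bdd).add hsum.hasSum.tendsto_sum_nat⟩

theorem inertial_sequence_lemma
    (φ δs αs : ℕ → ℝ)
    (hφ : ∀ k, 0 ≤ φ k) (hδs : ∀ k, 0 ≤ δs k) (hαs0 : ∀ k, 0 ≤ αs k)
    (α : ℝ) (hα : ∀ k, αs k ≤ α) (hα1 : α < 1) (hα0 : 0 ≤ α)
    (hrec : ∀ k, 1 ≤ k → φ (k + 1) ≤ φ k + αs k * (φ k - φ (k - 1)) + δs k)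
    (hsum : Summable δs) :
    (Summable fun k => max (φ (k + 1) - φ k) 0) ∧
    ∃ φstar : ℝ, 0 ≤ φstar ∧ Tendsto φ atTop (𝓝 φstar) := by
  have hstep (k : ℕ) :
      max (φ (k + 1 + 1) - φ (k + 1)) 0 ≤ α * max (φ (k + 1) - φ k) 0 + δs (k + 1) := by
    refine max_zero_le_mul_max_zero_add ?_ (hαs0 (k + 1)) (hα (k + 1)) (hδs (k + 1))
    have hrec' := hrec (k + 1) k.succ_pos
    rw [Nat.add_sub_cancel] at hrec'
    linarith
  have hpos : Summable fun k => max (φ (k + 1) - φ k) 0 :=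
    summable_of_succ_le_mul_add (fun k => le_max_right _ _) (fun k => hδs (k + 1))
      ((summable_nat_add_iff 1).mpr hsum) hα0 hα1 hstep
  obtain ⟨φstar, hlim⟩ :=
    exists_tendsto_of_summable_max_sub_zero ⟨0, forall_mem_range.mpr hφ⟩ hpos
  exact ⟨hpos, φstar, ge_of_tendsto' hlim hφ, hlim⟩
end
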